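/- arXiv:0810.1981 — 2 statements merged into one kernel-verified Lean document; each statement's English description precedes it below -/
import Mathlib

section
/- There exists an n-uniform hypergraph H, whose vertices can be arranged in a rooted binary tree T_H with every hyperedge being a level-descending path in T_H, such that every full branch (root-to-leaf path) of T_H contains a hyperedge of H, and every hyperedge of H intersects at most 2^(n-2) + 2^(n-3) other hyperedges. -/
/-!
Take the complete binary tree of depth `2n`. For each node `u` on level `n` there are three
kinds of hyperedges: `edgeT u` runs from level `2` down to the `true` child of `u`; `edgeFT u y`
runs from `u` through its grandchild `false, true` down to level `2n - 1`; `edgeFF u z` runs from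
the `false` child of `u` through its `false` child down to level `2n`. Every branch makes one of
these three turns below level `n`, so it contains a hyperedge.

If two descending paths meet, their bottom nodes have the same ancestor on the lower of the two
top levels. So `edgeT u` meets only the `2^(n-2)` edges `edgeT u'` with the same level-`2`
ancestor (itself included) and the `2^(n-3)` edges `edgeFT u _`; `edgeFT u y` meets only
`edgeT u` and the edges `edgeFT u _` and `edgeFF u _`; `edgeFF u z` meets only the edges
`edgeFT u _` and `edgeFF u _`, being disjoint from every `edgeT u'` on level `n + 1`.
-/

/-- The finset of all boolean lists of length `k` (nodes on level `k` of the
complete infinite rooted binary tree). -/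
def listsOfLen : ℕ → Finset (List Bool)
  | 0 => {[]}
  | k+1 => (listsOfLen k).image (· ++ [true]) ∪ (listsOfLen k).image (· ++ [false])

/-- The vertex set of the full branch (root-to-`l` path) ending at the node `l`. -/
def prefixesF (l : List Bool) : Finset (List Bool) :=
  (Finset.range (l.length + 1)).image (fun i => l.take i)

/-- The vertex set of the level-descending path starting at node `p` and
ending at node `p ++ q`. -/
def pathFinset (p q : List Bool) : Finset (List Bool) :=
  (Finset.range (q.length + 1)).image (fun i => p ++ q.take i)

/-- `S` is (the node set of) a rooted binary tree: it contains the root, is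
prefix-closed, and every node has either zero or two children. -/
def IsBinTree (S : Finset (List Bool)) : Prop :=
  [] ∈ S ∧ (∀ l ∈ S, ∀ p : List Bool, p <+: l → p ∈ S) ∧
    ∀ l ∈ S, ((l ++ [true]) ∈ S ↔ (l ++ [false]) ∈ S)

/-- `l` is a leaf of the tree `S`. -/
def IsLeaf (S : Finset (List Bool)) (l : List Bool) : Prop :=
  l ∈ S ∧ (l ++ [true]) ∉ S ∧ (l ++ [false]) ∉ S

/-- The edge `e` is a level-descending path inside the tree `S`. -/
def InTree (S : Finset (List Bool)) (e : Finset (List Bool)) : Prop :=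
  ∃ p q : List Bool, (p ++ q) ∈ S ∧ e = pathFinset p q

open Finset

lemma mem_listsOfLen {k : ℕ} {l : List Bool} : l ∈ listsOfLen k ↔ l.length = k := by
  induction k generalizing l with
  | zero => simp [listsOfLen, List.length_eq_zero_iff]
  | succ k ih =>
    simp only [listsOfLen, mem_union, mem_image]
    constructor
    · rintro (⟨a, ha, rfl⟩ | ⟨a, ha, rfl⟩) <;> simp [ih.1 ha]
    · intro hl
      rcases List.eq_nil_or_concat l with rfl | ⟨L, b, rfl⟩
      · simp at hl
      · have hL : L.length = k := by simpa using hl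
        cases b
        · exact Or.inr ⟨L, ih.2 hL, by simp⟩
        · exact Or.inl ⟨L, ih.2 hL, by simp⟩

lemma card_listsOfLen (k : ℕ) : #(listsOfLen k) = 2 ^ k := by
  induction k with
  | zero => rfl
  | succ k ih =>
    have append_injective (b : Bool) : Function.Injective (· ++ [b]) :=
      fun _ _ h => (List.append_inj' h rfl).1
    rw [listsOfLen, card_union_of_disjoint, card_image_of_injective _ (append_injective _),
      card_image_of_injective _ (append_injective _), ih, pow_succ, mul_two]
    simp only [disjoint_left, mem_image, not_exists, not_and]
    rintro _ ⟨a, -, rfl⟩ b - h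
    simpa using (List.append_inj' h rfl).2

lemma card_image_listsOfLen_le {α : Type*} [DecidableEq α] (f : List Bool → α) (k : ℕ) :
    #((listsOfLen k).image f) ≤ 2 ^ k :=
  card_image_le.trans_eq (card_listsOfLen k)

section Paths

variable {x p q : List Bool}

lemma mem_pathFinset : x ∈ pathFinset p q ↔ ∃ i ≤ q.length, x = p ++ q.take i := by
  simp only [pathFinset, mem_image, mem_range, Nat.lt_succ_iff, eq_comm]

lemma prefix_of_mem_pathFinset (hx : x ∈ pathFinset p q) : x <+: p ++ q := by
  obtain ⟨i, -, rfl⟩ := mem_pathFinset.1 hx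
  exact (List.prefix_append_right_inj p).2 (List.take_prefix i q)

lemma length_le_of_mem_pathFinset (hx : x ∈ pathFinset p q) : p.length ≤ x.length := by
  obtain ⟨i, -, rfl⟩ := mem_pathFinset.1 hx
  simp

lemma card_pathFinset (p q : List Bool) : #(pathFinset p q) = q.length + 1 := by
  rw [pathFinset, card_image_of_injOn, card_range]
  intro i hi j hj hij
  simp only [coe_range, Set.mem_Iio] at hi hj
  have := congrArg List.length hij
  simp only [List.length_append, List.length_take] at this
  omega

lemma mem_prefixesF {l : List Bool} : x ∈ prefixesF l ↔ x <+: l := by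
  simp only [prefixesF, mem_image, mem_range, Nat.lt_succ_iff]
  constructor
  · rintro ⟨i, -, rfl⟩
    exact List.take_prefix i l
  · intro h
    exact ⟨x.length, h.length_le, (List.prefix_iff_eq_take.1 h).symm⟩

lemma pathFinset_subset_prefixesF {l : List Bool} (h : p ++ q <+: l) :
    pathFinset p q ⊆ prefixesF l :=
  fun _ hx => mem_prefixesF.2 ((prefix_of_mem_pathFinset hx).trans h)

lemma take_eq_of_pathFinset_inter_nonempty {p' q' : List Bool}
    (h : (pathFinset p q ∩ pathFinset p' q').Nonempty) {K : ℕ}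
    (hK : K ≤ max p.length p'.length) : (p ++ q).take K = (p' ++ q').take K := by
  obtain ⟨x, hx⟩ := h
  obtain ⟨hx, hx'⟩ := mem_inter.1 hx
  have hKx : K ≤ x.length :=
    hK.trans (max_le (length_le_of_mem_pathFinset hx) (length_le_of_mem_pathFinset hx'))
  have take_eq {l : List Bool} (h : x <+: l) : l.take K = x.take K := by
    rw [List.prefix_iff_eq_take.1 h, List.take_take, min_eq_left hKx]
  rw [take_eq (prefix_of_mem_pathFinset hx), take_eq (prefix_of_mem_pathFinset hx')]

end Paths

def completeTree (d : ℕ) : Finset (List Bool) := (range (d + 1)).biUnion listsOfLen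

section CompleteTree

variable {d : ℕ} {l : List Bool}

lemma mem_completeTree : l ∈ completeTree d ↔ l.length ≤ d := by
  simp only [completeTree, mem_biUnion, mem_range, mem_listsOfLen, Nat.lt_succ_iff]
  exact ⟨fun ⟨_, hi, hl⟩ => hl ▸ hi, fun h => ⟨_, h, rfl⟩⟩

lemma isBinTree_completeTree (d : ℕ) : IsBinTree (completeTree d) := by
  refine ⟨mem_completeTree.2 (Nat.zero_le d), fun l hl p hp => ?_, fun l _ => ?_⟩
  · exact mem_completeTree.2 (hp.length_le.trans (mem_completeTree.1 hl))
  · simp only [mem_completeTree, List.length_append, List.length_singleton]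

lemma length_eq_of_isLeaf_completeTree (hl : IsLeaf (completeTree d) l) : l.length = d := by
  obtain ⟨hlT, hlt, -⟩ := hl
  rw [mem_completeTree] at hlT hlt
  simp only [List.length_append, List.length_singleton, not_le] at hlt
  omega

lemma inTree_completeTree {p q : List Bool} (h : (p ++ q).length ≤ d) :
    InTree (completeTree d) (pathFinset p q) :=
  ⟨p, q, mem_completeTree.2 h, rfl⟩

end CompleteTree

def edgeT (u : List Bool) : Finset (List Bool) := pathFinset (u.take 2) (u.drop 2 ++ [true])

def edgeFT (u y : List Bool) : Finset (List Bool) := pathFinset u (false :: true :: y)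

def edgeFF (u z : List Bool) : Finset (List Bool) := pathFinset (u ++ [false]) (false :: z)

def treeEdges (n : ℕ) : Finset (Finset (List Bool)) :=
  (listsOfLen n).image edgeT ∪
  (listsOfLen n ×ˢ listsOfLen (n - 3)).image (fun uy => edgeFT uy.1 uy.2) ∪
  (listsOfLen n ×ˢ listsOfLen (n - 2)).image (fun uz => edgeFF uz.1 uz.2)

section Edges

variable {n : ℕ} {e : Finset (List Bool)} {u u' y y' z z' : List Bool}

lemma mem_treeEdges : e ∈ treeEdges n ↔
    (∃ u, u.length = n ∧ e = edgeT u) ∨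
    (∃ u y, u.length = n ∧ y.length = n - 3 ∧ e = edgeFT u y) ∨
    (∃ u z, u.length = n ∧ z.length = n - 2 ∧ e = edgeFF u z) := by
  simp only [treeEdges, mem_union, mem_image, mem_product, Prod.exists, mem_listsOfLen, or_assoc,
    and_assoc, eq_comm (a := e)]

lemma take_two_eq_of_edgeT_inter_edgeT (hu : 2 ≤ u.length) (hu' : 2 ≤ u'.length)
    (h : (edgeT u ∩ edgeT u').Nonempty) : u.take 2 = u'.take 2 := by
  have := take_eq_of_pathFinset_inter_nonempty h (K := 2) (by simp; omega)
  simpa [List.take_append, hu, hu'] using this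

lemma eq_of_edgeT_inter_edgeFT (hu : u.length = n) (hu' : u'.length = n)
    (h : (edgeT u ∩ edgeFT u' y').Nonempty) : u = u' := by
  have := take_eq_of_pathFinset_inter_nonempty h (K := n) (by simp; omega)
  rwa [← List.append_assoc, List.take_append_drop, List.take_left' hu, List.take_left' hu'] at this

lemma not_nonempty_edgeT_inter_edgeFF (hu : u.length = n) (hu' : u'.length = n) :
    ¬(edgeT u ∩ edgeFF u' z').Nonempty := by
  intro h
  have := take_eq_of_pathFinset_inter_nonempty h (K := n + 1) (by simp [hu'])
  rw [← List.append_assoc, List.take_append_drop, List.take_of_length_le (by simp [hu]),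
    List.take_left' (by simp [hu'])] at this
  simpa using (List.append_inj' this rfl).2

lemma eq_of_edgeFT_inter_edgeFT (hu : u.length = n) (hu' : u'.length = n)
    (h : (edgeFT u y ∩ edgeFT u' y').Nonempty) : u = u' := by
  have := take_eq_of_pathFinset_inter_nonempty h (K := n) (by simp [hu])
  simpa [List.take_append, hu, hu'] using this

lemma eq_of_edgeFT_inter_edgeFF (hu : u.length = n) (hu' : u'.length = n)
    (h : (edgeFT u y ∩ edgeFF u' z').Nonempty) : u = u' := by
  have := take_eq_of_pathFinset_inter_nonempty h (K := n + 1) (by simp [hu'])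
  simpa [List.take_append, hu, hu', List.take_of_length_le] using this

lemma eq_of_edgeFF_inter_edgeFF (hu : u.length = n) (hu' : u'.length = n)
    (h : (edgeFF u z ∩ edgeFF u' z').Nonempty) : u = u' := by
  have := take_eq_of_pathFinset_inter_nonempty h (K := n + 1) (by simp [hu'])
  simpa [List.take_append, hu, hu', List.take_of_length_le] using this

end Edges

def neighbors {α : Type*} [DecidableEq α] (E : Finset (Finset α)) (e : Finset α) :
    Finset (Finset α) :=
  E.filter fun f => f ≠ e ∧ (e ∩ f).Nonempty

lemma card_neighbors_le {α : Type*} [DecidableEq α] {E T : Finset (Finset α)} {e : Finset α}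
    (he : e ∈ T) (hT : ∀ f ∈ E, f ≠ e → (e ∩ f).Nonempty → f ∈ T) :
    #(neighbors E e) ≤ #T - 1 := by
  rw [← card_erase_of_mem he]
  refine card_le_card fun f hf => ?_
  obtain ⟨hfE, hne, hint⟩ := mem_filter.1 hf
  exact mem_erase.2 ⟨hne, hT f hfE hne hint⟩

section Neighbors

variable {n : ℕ} {u y z : List Bool}

lemma card_neighbors_edgeT_le (hn : 3 ≤ n) (hu : u.length = n) :
    #(neighbors (treeEdges n) (edgeT u)) ≤ 2 ^ (n - 2) + 2 ^ (n - 3) := by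
  set T := (listsOfLen (n - 2)).image (fun b => edgeT (u.take 2 ++ b)) ∪
    (listsOfLen (n - 3)).image (edgeFT u)
  have hT : #T ≤ 2 ^ (n - 2) + 2 ^ (n - 3) :=
    (card_union_le _ _).trans (add_le_add (card_image_listsOfLen_le _ _)
      (card_image_listsOfLen_le _ _))
  have hu2 : 2 ≤ u.length := by omega
  have mem_T {u'} (hu' : u'.length = n) (h : u.take 2 = u'.take 2) : edgeT u' ∈ T := by
    refine mem_union_left _ (mem_image.2 ⟨u'.drop 2, mem_listsOfLen.2 (by simp [hu']), ?_⟩)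
    rw [h, List.take_append_drop]
  suffices hsub : ∀ f ∈ treeEdges n, f ≠ edgeT u → (edgeT u ∩ f).Nonempty → f ∈ T by
    have := card_neighbors_le (mem_T hu rfl) hsub
    omega
  intro f hf _ hint
  rcases mem_treeEdges.1 hf with ⟨u', hu', rfl⟩ | ⟨u', y', hu', hy', rfl⟩ | ⟨u', z', hu', -, rfl⟩
  · exact mem_T hu' (take_two_eq_of_edgeT_inter_edgeT hu2 (by omega) hint)
  · obtain rfl := eq_of_edgeT_inter_edgeFT hu hu' hint
    exact mem_union_right _ (mem_image_of_mem _ (mem_listsOfLen.2 hy'))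
  · exact absurd hint (not_nonempty_edgeT_inter_edgeFF hu hu')

lemma card_neighbors_edgeFT_le (hu : u.length = n) (hy : y.length = n - 3) :
    #(neighbors (treeEdges n) (edgeFT u y)) ≤ 2 ^ (n - 2) + 2 ^ (n - 3) := by
  set T := {edgeT u} ∪ (listsOfLen (n - 3)).image (edgeFT u) ∪
    (listsOfLen (n - 2)).image (edgeFF u)
  have hT : #T ≤ 1 + 2 ^ (n - 3) + 2 ^ (n - 2) :=
    (card_union_le _ _).trans (add_le_add ((card_union_le _ _).trans (add_le_add
      (card_singleton _).le (card_image_listsOfLen_le _ _))) (card_image_listsOfLen_le _ _))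
  have he : edgeFT u y ∈ T :=
    mem_union_left _ (mem_union_right _ (mem_image_of_mem _ (mem_listsOfLen.2 hy)))
  suffices hsub : ∀ f ∈ treeEdges n, f ≠ edgeFT u y → (edgeFT u y ∩ f).Nonempty → f ∈ T by
    have := card_neighbors_le he hsub
    exact this.trans (Nat.sub_le_of_le_add (hT.trans_eq (by ring)))
  intro f hf _ hint
  rw [inter_comm] at hint
  rcases mem_treeEdges.1 hf with ⟨u', hu', rfl⟩ | ⟨u', y', hu', hy', rfl⟩ | ⟨u', z', hu', hz', rfl⟩
  · obtain rfl := eq_of_edgeT_inter_edgeFT hu' hu hint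
    exact mem_union_left _ (mem_union_left _ (mem_singleton_self _))
  · obtain rfl := eq_of_edgeFT_inter_edgeFT hu' hu hint
    exact mem_union_left _ (mem_union_right _ (mem_image_of_mem _ (mem_listsOfLen.2 hy')))
  · rw [inter_comm] at hint
    obtain rfl := eq_of_edgeFT_inter_edgeFF hu hu' hint
    exact mem_union_right _ (mem_image_of_mem _ (mem_listsOfLen.2 hz'))

lemma card_neighbors_edgeFF_le (hu : u.length = n) (hz : z.length = n - 2) :
    #(neighbors (treeEdges n) (edgeFF u z)) ≤ 2 ^ (n - 2) + 2 ^ (n - 3) := by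
  set T := (listsOfLen (n - 3)).image (edgeFT u) ∪ (listsOfLen (n - 2)).image (edgeFF u)
  have hT : #T ≤ 2 ^ (n - 3) + 2 ^ (n - 2) :=
    (card_union_le _ _).trans (add_le_add (card_image_listsOfLen_le _ _)
      (card_image_listsOfLen_le _ _))
  have he : edgeFF u z ∈ T := mem_union_right _ (mem_image_of_mem _ (mem_listsOfLen.2 hz))
  suffices hsub : ∀ f ∈ treeEdges n, f ≠ edgeFF u z → (edgeFF u z ∩ f).Nonempty → f ∈ T by
    have := card_neighbors_le he hsub
    omega
  intro f hf _ hint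
  rw [inter_comm] at hint
  rcases mem_treeEdges.1 hf with ⟨u', hu', rfl⟩ | ⟨u', y', hu', hy', rfl⟩ | ⟨u', z', hu', hz', rfl⟩
  · exact absurd hint (not_nonempty_edgeT_inter_edgeFF hu' hu)
  · obtain rfl := eq_of_edgeFT_inter_edgeFF hu' hu hint
    exact mem_union_left _ (mem_image_of_mem _ (mem_listsOfLen.2 hy'))
  · obtain rfl := eq_of_edgeFF_inter_edgeFF hu' hu hint
    exact mem_union_right _ (mem_image_of_mem _ (mem_listsOfLen.2 hz'))

lemma card_neighbors_le_of_mem_treeEdges (hn : 3 ≤ n) {e : Finset (List Bool)}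
    (he : e ∈ treeEdges n) : #(neighbors (treeEdges n) e) ≤ 2 ^ (n - 2) + 2 ^ (n - 3) := by
  rcases mem_treeEdges.1 he with ⟨u, hu, rfl⟩ | ⟨u, y, hu, hy, rfl⟩ | ⟨u, z, hu, hz, rfl⟩
  · exact card_neighbors_edgeT_le hn hu
  · exact card_neighbors_edgeFT_le hu hy
  · exact card_neighbors_edgeFF_le hu hz

end Neighbors

section Hypergraph

variable {n : ℕ} {e : Finset (List Bool)}

lemma inTree_completeTree_of_mem_treeEdges (hn : 3 ≤ n) (he : e ∈ treeEdges n) :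
    InTree (completeTree (2 * n)) e := by
  rcases mem_treeEdges.1 he with ⟨u, hu, rfl⟩ | ⟨u, y, hu, hy, rfl⟩ | ⟨u, z, hu, hz, rfl⟩
  · exact inTree_completeTree (by simp [hu]; omega)
  · exact inTree_completeTree (by simp [hu, hy]; omega)
  · exact inTree_completeTree (by simp [hu, hz]; omega)

lemma card_eq_of_mem_treeEdges (hn : 3 ≤ n) (he : e ∈ treeEdges n) : #e = n := by
  rcases mem_treeEdges.1 he with ⟨u, hu, rfl⟩ | ⟨u, y, hu, hy, rfl⟩ | ⟨u, z, hu, hz, rfl⟩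
  · rw [edgeT, card_pathFinset]; simp [hu]; omega
  · rw [edgeFT, card_pathFinset]; simp [hy]; omega
  · rw [edgeFF, card_pathFinset]; simp [hz]; omega

lemma exists_mem_treeEdges_subset_prefixesF (hn : 3 ≤ n) {l : List Bool}
    (hl : l.length = 2 * n) : ∃ e ∈ treeEdges n, e ⊆ prefixesF l := by
  obtain ⟨u, b, c, z, rfl, hu, hz⟩ :
      ∃ u b c z, l = u ++ b :: c :: z ∧ u.length = n ∧ z.length = n - 2 := by
    have hdrop : (l.drop n).length = n := by simp; omega
    rcases hd : l.drop n with _ | ⟨b, _ | ⟨c, z⟩⟩ <;> rw [hd] at hdrop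
    · simp at hdrop; omega
    · simp at hdrop; omega
    · exact ⟨l.take n, b, c, z, by rw [← hd, List.take_append_drop], by simp; omega,
        by simp at hdrop; omega⟩
  cases b
  · cases c
    · refine ⟨edgeFF u z, mem_treeEdges.2 (.inr (.inr ⟨u, z, hu, hz, rfl⟩)), ?_⟩
      exact pathFinset_subset_prefixesF (by simp)
    · refine ⟨edgeFT u (z.take (n - 3)),
        mem_treeEdges.2 (.inr (.inl ⟨u, _, hu, by simp [hz]; omega, rfl⟩)), ?_⟩
      exact pathFinset_subset_prefixesF (by simp [List.take_prefix])
  · refine ⟨edgeT u, mem_treeEdges.2 (.inl ⟨u, hu, rfl⟩), pathFinset_subset_prefixesF ?_⟩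
    rw [← List.append_assoc, List.take_append_drop]
    simp

end Hypergraph

/-- There is an `n`-uniform hypergraph arranged on a rooted binary tree, all of
whose hyperedges are level-descending paths, such that every full branch contains
a hyperedge and every hyperedge intersects at most `2^(n-2) + 2^(n-3)` others. -/
theorem tree_hypergraph_small_neighborhood (n : ℕ) (hn : 3 ≤ n) :
    ∃ (S : Finset (List Bool)) (E : Finset (Finset (List Bool))),
      IsBinTree S ∧ (∀ e ∈ E, InTree S e) ∧ (∀ e ∈ E, e.card = n) ∧
      (∀ l : List Bool, IsLeaf S l → ∃ e ∈ E, e ⊆ prefixesF l) ∧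
      (∀ e ∈ E, ((E.filter fun f => f ≠ e ∧ (e ∩ f).Nonempty).card)
          ≤ 2 ^ (n - 2) + 2 ^ (n - 3)) :=
  ⟨completeTree (2 * n), treeEdges n, isBinTree_completeTree _,
    fun _ he => inTree_completeTree_of_mem_treeEdges hn he,
    fun _ he => card_eq_of_mem_treeEdges hn he,
    fun _ hl => exists_mem_treeEdges_subset_prefixesF hn (length_eq_of_isLeaf_completeTree hl),
    fun _ he => card_neighbors_le_of_mem_treeEdges hn he⟩
end

section
/- Let F be an n-uniform hypergraph with maximum degree at most 2^n/(4en) and an even number of vertices. Then for every perfect pairing (v_{i_1}, w_{i_1}), (v_{i_2}, w_{i_2}), ... of the vertices of F, there exists a proper 2-coloring of F in which v_{i_k} and w_{i_k} receive different colors for every k. -/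
/-!
Give each pair `{v, p v}` one fair random bit and color `v` and `p v` by that bit and its
negation, so that every coloring of this form respects the pairing. An edge containing a whole
pair is never monochromatic; any other edge meets `n` distinct pairs and is monochromatic with
probability `2 ^ (1 - n)`. Its event depends only on the bits of those pairs, so it is mutually
independent of all but the fewer than `2 n D ≤ 2 ^ n / (2 e)` events of edges meeting one of
them, where `D` bounds the degree. The symmetric Lovász Local Lemma then yields a choice of bits
for which no edge is monochromatic.
-/

open Finset Real

section ProductSpace

variable {ι α κ : Type*} [Fintype ι] [DecidableEq ι] [Fintype α]

theorem card_mul_card_eq_card_inter_mul_card [DecidableEq α] {X Y : Finset (ι → α)}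
    {T : Set ι} (hX : DependsOn (· ∈ X) T) (hY : DependsOn (· ∈ Y) Tᶜ) :
    #X * #Y = #(X ∩ Y) * Fintype.card (ι → α) := by
  classical
  rw [← card_product, ← card_univ, ← card_product]
  -- exchanging the `T`-coordinates of two outcomes maps `X ×ˢ Y` onto `(X ∩ Y) ×ˢ univ`
  let swap : (ι → α) × (ι → α) → (ι → α) × (ι → α) :=
    fun ωσ => (T.piecewise ωσ.1 ωσ.2, T.piecewise ωσ.2 ωσ.1)
  have swap_swap : ∀ ωσ, swap (swap ωσ) = ωσ := fun ωσ => by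
    ext i <;> by_cases hi : i ∈ T <;> simp [swap, hi]
  refine card_nbij' swap swap ?_ ?_ (fun ωσ _ => swap_swap ωσ) (fun ωσ _ => swap_swap ωσ)
  · rintro ⟨ω, σ⟩ h
    simp only [coe_product, Set.mem_prod, mem_coe] at h
    simp only [swap, coe_product, Set.mem_prod, mem_coe, mem_inter, mem_univ, and_true]
    exact ⟨(hX fun i hi => by simp [hi]).mp h.1,
      (hY fun i hi => by simp [Set.notMem_of_mem_compl hi]).mp h.2⟩
  · rintro ⟨τ, ρ⟩ h
    simp only [coe_product, Set.mem_prod, mem_coe, mem_inter] at h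
    simp only [swap, coe_product, Set.mem_prod, mem_coe]
    exact ⟨(hX fun i hi => by simp [hi]).mp h.1.1,
      (hY fun i hi => by simp [Set.notMem_of_mem_compl hi]).mp h.1.2⟩

theorem card_mul_pow_card_le_of_eqOn {S : Finset (ι → α)} {T : Finset ι}
    (h : ∀ ω ∈ S, ∀ ω' ∈ S, ∀ i ∈ T, ω i = ω' i) :
    #S * Fintype.card α ^ #T ≤ Fintype.card (ι → α) := by
  have hinj : Set.InjOn
      (fun (ωτ : (ι → α) × (T → α)) (i : ι) => if hi : i ∈ T then ωτ.2 ⟨i, hi⟩ else ωτ.1 i)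
      ↑(S ×ˢ (univ : Finset (T → α))) := by
    rintro ⟨ω, τ⟩ hωτ ⟨ω', τ'⟩ hωτ' heq
    simp only [coe_product, Set.mem_prod, mem_coe, mem_univ, and_true] at hωτ hωτ'
    refine Prod.ext (funext fun i => ?_) (funext fun i => ?_)
    · by_cases hi : i ∈ T
      · exact h ω hωτ ω' hωτ' i hi
      · simpa [hi] using congrFun heq i
    · simpa [i.2] using congrFun heq i
  simpa [card_product, Fintype.card_fun] using
    card_le_card_of_injOn _ (fun _ _ => mem_univ _) hinj

theorem dependsOn_mem_compl_biUnion [DecidableEq α] {A : κ → Finset (ι → α)} {S : Finset κ}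
    {T : Set ι} (h : ∀ j ∈ S, DependsOn (· ∈ A j) T) : DependsOn (· ∈ (S.biUnion A)ᶜ) T := by
  intro ω ω' hωω'
  simp only [mem_compl, mem_biUnion, not_exists, not_and]
  exact propext <| forall₂_congr fun j hj => (h j hj hωω').to_iff.not

end ProductSpace

theorem one_div_exp_one_mul_le (d : ℕ) :
    1 / (exp 1 * (d + 1)) ≤ 1 / (d + 2) * (1 - 1 / (d + 2)) ^ d := by
  have hexp := one_add_inv_pow_le_exp (n := d + 1)
  have key : 1 / ((d : ℝ) + 2) * (1 - 1 / (d + 2)) ^ d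
      = 1 / ((1 + ((d + 1 : ℕ) : ℝ)⁻¹) ^ (d + 1) * (d + 1)) := by
    rw [show 1 - 1 / ((d : ℝ) + 2) = (d + 1) / (d + 2) by field_simp; ring,
      show 1 + ((d + 1 : ℕ) : ℝ)⁻¹ = (d + 2) / (d + 1) by push_cast; field_simp; ring,
      div_pow, div_pow]
    field_simp
    ring
  rw [key]
  gcongr

section Avoidance

variable {Ω κ : Type*} [Fintype Ω] [DecidableEq Ω] [DecidableEq κ]

theorem card_compl_biUnion_insert_add (A : κ → Finset Ω) (a : κ) (S : Finset κ) :
    #((insert a S).biUnion A)ᶜ + #(A a ∩ (S.biUnion A)ᶜ) = #(S.biUnion A)ᶜ := by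
  rw [biUnion_insert, compl_union, inter_comm _ (S.biUnion A)ᶜ, inter_comm (A a),
    ← sdiff_eq_inter_compl, card_sdiff_add_card_inter]

theorem one_sub_pow_mul_card_compl_biUnion_le {A : κ → Finset Ω} {x : ℝ} (hx : x ≤ 1)
    (W U : Finset κ) (h : ∀ U' ⊂ U, ∀ k ∈ U \ U',
      (#(A k ∩ ((W ∪ U').biUnion A)ᶜ) : ℝ) ≤ x * #((W ∪ U').biUnion A)ᶜ) :
    (1 - x) ^ #U * #(W.biUnion A)ᶜ ≤ (#((W ∪ U).biUnion A)ᶜ : ℝ) := by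
  induction U using Finset.induction_on with
  | empty => simp
  | @insert a U ha ih =>
    have hstep := h U (ssubset_insert ha) a (by simp [ha])
    have hrest := ih fun U' hU' => fun k hk =>
      h U' (hU'.trans (ssubset_insert ha)) k (sdiff_subset_sdiff (subset_insert a U) le_rfl hk)
    have hsplit : (#((insert a (W ∪ U)).biUnion A)ᶜ : ℝ)
        = #((W ∪ U).biUnion A)ᶜ - #(A a ∩ ((W ∪ U).biUnion A)ᶜ) := by
      rw [← card_compl_biUnion_insert_add A a (W ∪ U)]
      push_cast
      ring
    rw [union_insert, card_insert_of_notMem ha, hsplit, pow_succ']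
    calc (1 - x) * (1 - x) ^ #U * #(W.biUnion A)ᶜ
        ≤ (1 - x) * #((W ∪ U).biUnion A)ᶜ := by
          rw [mul_assoc]
          exact mul_le_mul_of_nonneg_left hrest (sub_nonneg.2 hx)
      _ ≤ _ := by linarith

end Avoidance

def dependencyNeighbors {ι κ : Type*} [DecidableEq ι] [Fintype κ] [DecidableEq κ]
    (vbl : κ → Finset ι) (k : κ) : Finset κ :=
  {j | j ≠ k ∧ ¬Disjoint (vbl j) (vbl k)}

section LocalLemma

variable {ι α κ : Type*} [Fintype ι] [DecidableEq ι] [Fintype α] [DecidableEq α]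
  [Fintype κ] [DecidableEq κ]

theorem card_inter_compl_biUnion_le {A : κ → Finset (ι → α)} {vbl : κ → Finset ι} {x : ℝ}
    (hA : ∀ k, DependsOn (· ∈ A k) (vbl k : Set ι)) (hx₀ : 0 ≤ x) (hx₁ : x ≤ 1)
    (hp : ∀ k, (#(A k) : ℝ) ≤
      x * (1 - x) ^ #(dependencyNeighbors vbl k) * Fintype.card (ι → α))
    (S : Finset κ) {k : κ} (hk : k ∉ S) :
    (#(A k ∩ (S.biUnion A)ᶜ) : ℝ) ≤ x * #(S.biUnion A)ᶜ := by
  induction S using Finset.strongInduction generalizing k with | H S ih =>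
  set S₁ := {j ∈ S | ¬Disjoint (vbl j) (vbl k)}
  set S₂ := {j ∈ S | Disjoint (vbl j) (vbl k)}
  have hS : S₂ ∪ S₁ = S := filter_union_filter_not_eq _ S
  have hS₁ : #S₁ ≤ #(dependencyNeighbors vbl k) :=
    card_le_card fun j hj => by
      simp only [S₁, mem_filter] at hj
      simpa [dependencyNeighbors, hj.2] using ne_of_mem_of_not_mem hj.1 hk
  -- the events indexed by `S₂` share no variable with `A k`
  have hindep := card_mul_card_eq_card_inter_mul_card (hA k) <|
    dependsOn_mem_compl_biUnion (S := S₂) fun j hj => (hA j).mono <|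
      Set.subset_compl_iff_disjoint_right.2 <| by simpa using (mem_filter.1 hj).2
  have hchain : (1 - x) ^ #S₁ * #(S₂.biUnion A)ᶜ ≤ (#(S.biUnion A)ᶜ : ℝ) := by
    rw [← hS]
    refine one_sub_pow_mul_card_compl_biUnion_le hx₁ S₂ S₁ fun U hU j hj => ?_
    obtain ⟨hj₁, hjU⟩ := mem_sdiff.1 hj
    have hjS₂ : j ∉ S₂ ∪ U := by
      simp only [S₁, mem_filter] at hj₁
      simp [S₂, hj₁.2, hjU]
    refine ih _ ((ssubset_iff_of_subset ?_).2 ⟨j, hS ▸ mem_union_right _ hj₁, hjS₂⟩) hjS₂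
    exact hS ▸ union_subset_union le_rfl hU.subset
  rcases (Fintype.card (ι → α)).eq_zero_or_pos with hΩ | hΩ
  · have := Fintype.card_eq_zero_iff.1 hΩ
    simp [Subsingleton.elim _ (∅ : Finset (ι → α))]
  have hΩ : (0 : ℝ) < Fintype.card (ι → α) := by exact_mod_cast hΩ
  calc (#(A k ∩ (S.biUnion A)ᶜ) : ℝ)
      ≤ #(A k ∩ (S₂.biUnion A)ᶜ) := by
        gcongr
        exact filter_subset _ S
    _ = #(A k) * #(S₂.biUnion A)ᶜ / Fintype.card (ι → α) := by
        rw [eq_div_iff hΩ.ne']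
        exact_mod_cast hindep.symm
    _ ≤ x * (1 - x) ^ #S₁ * #(S₂.biUnion A)ᶜ := by
        rw [div_le_iff₀ hΩ]
        have hpow : (1 - x) ^ #(dependencyNeighbors vbl k) ≤ (1 - x) ^ #S₁ :=
          pow_le_pow_of_le_one (by linarith) (by linarith) hS₁
        calc (#(A k) : ℝ) * #(S₂.biUnion A)ᶜ
            ≤ x * (1 - x) ^ #(dependencyNeighbors vbl k) * Fintype.card (ι → α)
              * #(S₂.biUnion A)ᶜ := by gcongr; exact hp k
          _ ≤ _ := by
            rw [mul_right_comm]
            gcongr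
    _ ≤ x * #(S.biUnion A)ᶜ := by
        rw [mul_assoc]
        exact mul_le_mul_of_nonneg_left hchain hx₀

-- The Lovász Local Lemma in counting form, for events `A k` determined by the variables `vbl k`.
theorem exists_forall_notMem_of_card_le [Nonempty α] {A : κ → Finset (ι → α)}
    {vbl : κ → Finset ι} {x : ℝ} (hA : ∀ k, DependsOn (· ∈ A k) (vbl k : Set ι))
    (hx₀ : 0 ≤ x) (hx₁ : x < 1)
    (hp : ∀ k, (#(A k) : ℝ) ≤
      x * (1 - x) ^ #(dependencyNeighbors vbl k) * Fintype.card (ι → α)) :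
    ∃ ω, ∀ k, ω ∉ A k := by
  have hgood : (1 - x) ^ Fintype.card κ * Fintype.card (ι → α)
      ≤ (#((univ : Finset κ).biUnion A)ᶜ : ℝ) := by
    simpa only [biUnion_empty, compl_empty, card_univ, empty_union] using
      one_sub_pow_mul_card_compl_biUnion_le hx₁.le ∅ univ fun U _ k hk => by
        simpa only [empty_union] using
          card_inter_compl_biUnion_le hA hx₀ hx₁.le hp U (mem_sdiff.1 hk).2
  obtain ⟨ω, hω⟩ : ((univ : Finset κ).biUnion A)ᶜ.Nonempty := by
    rw [← card_pos, ← Nat.cast_pos (α := ℝ)]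
    refine lt_of_lt_of_le ?_ hgood
    have : 0 < 1 - x := by linarith
    positivity
  exact ⟨ω, fun k hk => by simp_all⟩

theorem exists_forall_notMem_of_exp_mul_card_mul_le [Nonempty α] {A : κ → Finset (ι → α)}
    {vbl : κ → Finset ι} (hA : ∀ k, DependsOn (· ∈ A k) (vbl k : Set ι)) (d : ℕ)
    (hd : ∀ k, #(dependencyNeighbors vbl k) ≤ d)
    (hp : ∀ k, exp 1 * #(A k) * (d + 1) ≤ Fintype.card (ι → α)) :
    ∃ ω, ∀ k, ω ∉ A k := by
  refine exists_forall_notMem_of_card_le hA (x := 1 / (d + 2)) (by positivity)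
    ((div_lt_one (by positivity)).2 (by linarith)) fun k => ?_
  have hx₀ : 0 ≤ 1 / ((d : ℝ) + 2) := by positivity
  have hx₁ : 1 / ((d : ℝ) + 2) ≤ 1 := div_le_one_of_le₀ (by linarith) (by positivity)
  calc (#(A k) : ℝ) ≤ 1 / (exp 1 * (d + 1)) * Fintype.card (ι → α) := by
        rw [one_div_mul_eq_div, le_div_iff₀ (by positivity)]
        linarith [hp k]
    _ ≤ 1 / (d + 2) * (1 - 1 / (d + 2)) ^ d * Fintype.card (ι → α) := by
        gcongr
        exact one_div_exp_one_mul_le d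
    _ ≤ _ := by
        gcongr ?_ * ?_ * _
        exact pow_le_pow_of_le_one (by linarith) (by linarith) (hd k)

end LocalLemma

theorem Function.Involutive.exists_bool_apply_eq_not {V : Type*} {p : V → V}
    (hp : Function.Involutive p) (hfix : ∀ v, p v ≠ v) :
    ∃ s : V → Bool, ∀ v, s (p v) = !s v := by
  classical
  refine ⟨fun v => decide (WellOrderingRel v (p v)), fun v => ?_⟩
  show decide (WellOrderingRel (p v) (p (p v))) = !decide (WellOrderingRel v (p v))
  rw [hp v]
  rcases trichotomous_of WellOrderingRel v (p v) with h | h | h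
  · simp [h, asymm h]
  · exact absurd h.symm (hfix v)
  · simp [h, asymm h]

section PairColoring

variable {V : Type*} (p : V → V) (s : V → Bool)

def pairRep (v : V) : V := if s v then v else p v

-- `ω (pairRep p s v)` is the bit of the pair `{v, p v}`, and `s` negates it on one side.
def pairColoring (ω : V → Bool) (v : V) : Bool := xor (s v) (ω (pairRep p s v))

def monochromatic [Fintype V] [DecidableEq V] (e : Finset V) : Finset (V → Bool) :=
  {ω | ∃ b, ∀ v ∈ e, pairColoring p s ω v = b}

variable {p s}

theorem pairRep_apply (hp : Function.Involutive p) (hs : ∀ v, s (p v) = !s v) (v : V) :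
    pairRep p s (p v) = pairRep p s v := by
  unfold pairRep
  rw [hs]
  cases s v <;> simp [hp v]

theorem eq_or_eq_of_pairRep_eq (hp : Function.Involutive p) {v w : V}
    (h : pairRep p s v = pairRep p s w) : w = v ∨ w = p v := by
  unfold pairRep at h
  split_ifs at h with hv hw hw
  · exact Or.inl h.symm
  · exact Or.inr (by rw [h, hp w])
  · exact Or.inr h.symm
  · exact Or.inl (hp.injective h).symm

theorem pairColoring_apply_ne (hp : Function.Involutive p) (hs : ∀ v, s (p v) = !s v)
    (ω : V → Bool) (v : V) : pairColoring p s ω (p v) ≠ pairColoring p s ω v := by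
  unfold pairColoring
  rw [hs, pairRep_apply hp hs]
  cases s v <;> simp

variable [Fintype V] [DecidableEq V]

theorem monochromatic_eq_empty (hp : Function.Involutive p) (hs : ∀ v, s (p v) = !s v)
    {e : Finset V} {v : V} (hv : v ∈ e) (hpv : p v ∈ e) : monochromatic p s e = ∅ := by
  refine eq_empty_of_forall_notMem fun ω hω => ?_
  obtain ⟨b, hb⟩ := (mem_filter.1 hω).2
  exact pairColoring_apply_ne hp hs ω v ((hb _ hpv).trans (hb v hv).symm)

theorem dependsOn_mem_monochromatic (e : Finset V) :
    DependsOn (· ∈ monochromatic p s e) (e.image (pairRep p s) : Set V) := by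
  intro ω ω' h
  have hc : ∀ v ∈ e, pairColoring p s ω v = pairColoring p s ω' v := fun v hv => by
    simp only [pairColoring, h (pairRep p s v) (by simpa using ⟨v, hv, rfl⟩)]
  simp only [monochromatic, mem_filter, mem_univ, true_and]
  exact propext <| exists_congr fun b => forall₂_congr fun v hv => by rw [hc v hv]

theorem card_monochromatic_mul_le (hp : Function.Involutive p) (hs : ∀ v, s (p v) = !s v)
    (e : Finset V) : #(monochromatic p s e) * 2 ^ #e ≤ 2 * 2 ^ Fintype.card V := by
  by_cases hpair : ∃ v ∈ e, p v ∈ e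
  · obtain ⟨v, hv, hpv⟩ := hpair
    simp [monochromatic_eq_empty hp hs hv hpv]
  push Not at hpair
  have hinj : Set.InjOn (pairRep p s) e := fun v hv w hw h =>
    ((eq_or_eq_of_pairRep_eq hp h).resolve_right fun hwv => hpair v hv (hwv ▸ hw)).symm
  -- a coloring constant equal to `b` on `e` is determined by `b` at the representatives of `e`
  set S : Bool → Finset (V → Bool) := fun b => {ω | ∀ v ∈ e, pairColoring p s ω v = b}
  have hconst : ∀ b, #(S b) * 2 ^ #e ≤ 2 ^ Fintype.card V := by
    intro b
    rw [← card_image_of_injOn hinj]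
    simpa using card_mul_pow_card_le_of_eqOn (S := S b) (T := e.image (pairRep p s))
      fun ω hω ω' hω' i hi => by
        obtain ⟨v, hv, rfl⟩ := mem_image.1 hi
        exact Bool.bne_right_inj.1 <|
          ((mem_filter.1 hω).2 v hv).trans ((mem_filter.1 hω').2 v hv).symm
  have hsub : monochromatic p s e ⊆ S true ∪ S false := by
    intro ω hω
    obtain ⟨b, hb⟩ := (mem_filter.1 hω).2
    simp only [S, mem_union, mem_filter, mem_univ, true_and]
    cases b
    exacts [Or.inr hb, Or.inl hb]
  calc #(monochromatic p s e) * 2 ^ #e ≤ (#(S true) + #(S false)) * 2 ^ #e := by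
        gcongr
        exact (card_le_card hsub).trans (card_union_le _ _)
    _ ≤ 2 * 2 ^ Fintype.card V := by
        linarith [hconst true, hconst false]

theorem exists_ne_of_notMem_monochromatic {ω : V → Bool} {e : Finset V}
    (h : ω ∉ monochromatic p s e) :
    ∃ v ∈ e, ∃ w ∈ e, pairColoring p s ω v ≠ pairColoring p s ω w := by
  simp only [monochromatic, mem_filter, mem_univ, true_and, not_exists, not_forall] at h
  obtain ⟨v, hv, hvt⟩ := h true
  obtain ⟨w, hw, hwf⟩ := h false
  exact ⟨v, hv, w, hw, by simp_all⟩

theorem map_insert_dependencyNeighbors_subset (hp : Function.Involutive p)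
    (E : Finset (Finset V)) (e : E) (he : e.1.Nonempty) :
    (insert e (dependencyNeighbors (fun f : E => f.1.image (pairRep p s)) e)).map
      (Function.Embedding.subtype _) ⊆ e.1.biUnion fun v => {f ∈ E | v ∈ f ∨ p v ∈ f} := by
  intro f hf
  obtain ⟨j, hj, rfl⟩ := mem_map.1 hf
  rcases mem_insert.1 hj with rfl | hj
  · obtain ⟨v, hv⟩ := he
    exact mem_biUnion.2 ⟨v, hv, by simp [hv]⟩
  · simp only [dependencyNeighbors, mem_filter, mem_univ, true_and, not_disjoint_iff,
      mem_image] at hj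
    obtain ⟨-, i, ⟨w, hw, rfl⟩, v, hv, hvw⟩ := hj
    refine mem_biUnion.2 ⟨v, hv, mem_filter.2 ⟨j.2, ?_⟩⟩
    rcases eq_or_eq_of_pairRep_eq hp hvw with rfl | rfl
    · exact Or.inl hw
    · exact Or.inr hw

theorem card_dependencyNeighbors_add_one_le (hp : Function.Involutive p) {n : ℕ} (hn : 1 ≤ n)
    {E : Finset (Finset V)} (hunif : ∀ e ∈ E, #e = n) {D : ℝ}
    (hdeg : ∀ v, (#{f ∈ E | v ∈ f} : ℝ) ≤ D) (e : E) :
    (#(dependencyNeighbors (fun f : E => f.1.image (pairRep p s)) e) : ℝ) + 1 ≤ 2 * n * D := by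
  have hnotMem : e ∉ dependencyNeighbors (fun f : E => f.1.image (pairRep p s)) e := by
    simp [dependencyNeighbors]
  have he : e.1.Nonempty := card_pos.1 (by rw [hunif e e.2]; omega)
  have hcount : #(dependencyNeighbors (fun f : E => f.1.image (pairRep p s)) e) + 1
      ≤ ∑ v ∈ e.1, (#{f ∈ E | v ∈ f} + #{f ∈ E | p v ∈ f}) := by
    rw [← card_insert_of_notMem hnotMem, ← card_map (Function.Embedding.subtype _)]
    refine (card_le_card (map_insert_dependencyNeighbors_subset hp E e he)).trans
      (card_biUnion_le.trans (sum_le_sum fun v _ => ?_))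
    rw [filter_or]
    exact card_union_le _ _
  calc (#(dependencyNeighbors (fun f : E => f.1.image (pairRep p s)) e) : ℝ) + 1
      ≤ ∑ v ∈ e.1, ((#{f ∈ E | v ∈ f} : ℝ) + #{f ∈ E | p v ∈ f}) := by exact_mod_cast hcount
    _ ≤ ∑ v ∈ e.1, 2 * D := sum_le_sum fun v _ => by linarith [hdeg v, hdeg (p v)]
    _ = 2 * n * D := by rw [sum_const, nsmul_eq_mul, hunif e e.2]; ring

end PairColoring

/-- Every `n`-uniform hypergraph with maximum degree at most `2^n/(4en)` admits,
for every perfect pairing of its vertices (a fixed-point-free involution `p`),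
a proper 2-coloring in which the two vertices of each pair get different colors. -/
theorem proper_coloring_respecting_pairing {V : Type} [Fintype V] [DecidableEq V]
    (n : ℕ) (hn : 1 ≤ n) (E : Finset (Finset V))
    (hunif : ∀ e ∈ E, e.card = n)
    (hdeg : ∀ v : V, ((E.filter fun e => v ∈ e).card : ℝ)
      ≤ (2 : ℝ) ^ (n : ℕ) / (4 * Real.exp 1 * n))
    (p : V → V) (hinv : Function.Involutive p) (hnofix : ∀ v : V, p v ≠ v) :
    ∃ c : V → Bool,
      (∀ e ∈ E, ∃ v ∈ e, ∃ w ∈ e, c v ≠ c w) ∧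
      (∀ v : V, c (p v) ≠ c v) := by
  obtain ⟨s, hs⟩ := hinv.exists_bool_apply_eq_not hnofix
  set vbl : E → Finset V := fun f => f.1.image (pairRep p s)
  set d := univ.sup fun f : E => #(dependencyNeighbors vbl f)
  have hd : ∀ f : E, (d : ℝ) + 1 ≤ 2 ^ n / (2 * exp 1) := fun f => by
    obtain ⟨g, -, hg⟩ : ∃ g ∈ univ, d = #(dependencyNeighbors vbl g) :=
      exists_mem_eq_sup _ ⟨f, mem_univ f⟩ _
    rw [hg]
    refine (card_dependencyNeighbors_add_one_le (s := s) hinv hn hunif hdeg g).trans_eq ?_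
    field_simp
    ring
  have hA : ∀ f : E, exp 1 * #(monochromatic p s f.1) * (d + 1) ≤ Fintype.card (V → Bool) :=
    fun f => by
      have hf : (#(monochromatic p s f.1) : ℝ) * 2 ^ n ≤ 2 * 2 ^ Fintype.card V := by
        exact_mod_cast hunif f f.2 ▸ card_monochromatic_mul_le hinv hs f.1
      rw [Fintype.card_fun, Fintype.card_bool, Nat.cast_pow, Nat.cast_ofNat]
      calc exp 1 * #(monochromatic p s f.1) * (d + 1)
          ≤ exp 1 * #(monochromatic p s f.1) * (2 ^ n / (2 * exp 1)) := by gcongr; exact hd f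
        _ = #(monochromatic p s f.1) * 2 ^ n / 2 := by field_simp
        _ ≤ 2 ^ Fintype.card V := by linarith
  obtain ⟨ω, hω⟩ := exists_forall_notMem_of_exp_mul_card_mul_le
    (fun f : E => dependsOn_mem_monochromatic f.1) d
    (fun f => le_sup (f := fun g => #(dependencyNeighbors vbl g)) (mem_univ f)) hA
  exact ⟨pairColoring p s ω, fun e he => exists_ne_of_notMem_monochromatic (hω ⟨e, he⟩),
    pairColoring_apply_ne hinv hs ω⟩
end
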